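/- Let 1<p<2 and ℓ≥2. For all ξ, η ∈ ℂ^ℓ with |ξ|+|ξ−η|>0 one has C_p(ξ,η) ≤ c₃(p)·|η|²/(|ξ|+|ξ−η|)^{2−p}, where c₃(p) := sup over (s,t)∈ℝ² with s²+t²>0 of ((t² + s² + 2s + 1)^{p/2} − 1 − ps)/((√(t² + s² + 2s + 1) + 1)^{p−2}(t² + s²)). Moreover c₃(p) ∈ [p/2^{p−1}, +∞). -/

import Mathlib

/-!
Both sides are homogeneous of degree `p` in `(ξ, η)`. Normalising by `a = |ξ - η|` and putting
`s = Re⟨ξ - η, η⟩ / a²`, `s² + t² = |η|² / a²` (possible by Cauchy–Schwarz), the inequality becomes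
exactly the inequality between one of the quotients defining `c₃(p)` and their supremum. The
supremum is finite because each quotient is at most `8`. The lower bound `p / 2^{p-1}` is the
value of the quotient at `(s, t) = (-2, 0)`, that is at `ξ = -(ξ - η)`. In the degenerate case
`ξ = η` the claim is `|ξ|^p ≤ c₃(p) |ξ|^p`, which holds because `2^{p-1} ≤ p`.
-/

open Real Complex

noncomputable section

/-- The `C_p`-functional on `ℂ^ℓ`:
`C_p(ξ,η) = |ξ|^p − |ξ−η|^p − p|ξ−η|^{p−2} Re⟨ξ−η, η⟩`.
(When `ξ = η` the last term vanishes automatically since `Re⟨0,η⟩ = 0`.) -/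
def Cp (p : ℝ) {ℓ : ℕ} (ξ η : EuclideanSpace ℂ (Fin ℓ)) : ℝ :=
  ‖ξ‖ ^ p - ‖ξ - η‖ ^ p - p * ‖ξ - η‖ ^ (p - 2) * (inner ℂ (ξ - η) η : ℂ).re

end

/-- The constant `c₃(p)`, as a supremum over `(s,t) ∈ ℝ²` with `s² + t² > 0`. -/
noncomputable def c3 (p : ℝ) : ℝ :=
  sSup {r : ℝ | ∃ s t : ℝ, 0 < s ^ 2 + t ^ 2 ∧
    r = ((t ^ 2 + s ^ 2 + 2 * s + 1) ^ (p / 2) - 1 - p * s) /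
      ((Real.sqrt (t ^ 2 + s ^ 2 + 2 * s + 1) + 1) ^ (p - 2) * (t ^ 2 + s ^ 2))}

section

variable {p : ℝ}

lemma rpow_sub_one_sub_mul_le_eight_mul {s q : ℝ} (hp1 : 1 ≤ p) (hp2 : p ≤ 2)
    (hsq : s ^ 2 ≤ q) :
    (q + 2 * s + 1) ^ (p / 2) - 1 - p * s ≤ 8 * ((√(q + 2 * s + 1) + 1) ^ (p - 2) * q) := by
  have hq : 0 ≤ q := (sq_nonneg s).trans hsq
  have hX : 0 ≤ q + 2 * s + 1 := by nlinarith [sq_nonneg (s + 1)]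
  set A := √(q + 2 * s + 1)
  have hA0 : 0 ≤ A := sqrt_nonneg _
  have hA2 : A ^ 2 = q + 2 * s + 1 := sq_sqrt hX
  set E := (A + 1) ^ (2 - p)
  have hE0 : 0 < E := by positivity
  have hEA : E ≤ A + 1 := rpow_le_self_of_one_le (by linarith) (by linarith)
  rw [show p - 2 = -(2 - p) by ring, rpow_neg (by positivity), inv_mul_eq_div, mul_div_assoc',
    le_div_iff₀ hE0]
  rcases le_or_gt A 3 with hA3 | hA3
  -- For bounded `A` the numerator is at most `p/2 · q` by concavity of `x ↦ x^{p/2}`.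
  · have hconcave : (q + 2 * s + 1) ^ (p / 2) ≤ 1 + p / 2 * (2 * s + q) := by
      have := rpow_one_add_le_one_add_mul_self (s := 2 * s + q) (by nlinarith)
        (by linarith : 0 ≤ p / 2) (by linarith)
      rwa [show 1 + (2 * s + q) = q + 2 * s + 1 by ring] at this
    have hN : (q + 2 * s + 1) ^ (p / 2) - 1 - p * s ≤ q := by nlinarith
    nlinarith [mul_le_mul_of_nonneg_right hN hE0.le, mul_le_mul_of_nonneg_left hEA hq]
  -- For large `A`, the numerator grows like `A^p` and `A ≤ 1 + √q`.
  · set h := √q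
    have hh0 : 0 ≤ h := sqrt_nonneg q
    have hh2 : h ^ 2 = q := sq_sqrt hq
    obtain ⟨hs_lower, hs_upper⟩ := abs_le.mp (abs_le_sqrt hsq)
    have hAh : A ≤ 1 + h := by nlinarith
    have hApE : A ^ p * E ≤ (A + 1) ^ 2 := by
      calc A ^ p * E ≤ (A + 1) ^ p * E := by gcongr; linarith
        _ = (A + 1) ^ 2 := by rw [← rpow_add (by linarith)]; norm_num
    have hN : A ^ p - 1 - p * s ≤ A ^ p + 2 * h := by nlinarith
    rw [rpow_div_two_eq_sqrt p hX]
    nlinarith [mul_le_mul_of_nonneg_right hN hE0.le, mul_le_mul_of_nonneg_left hEA hh0]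

lemma c3_bddAbove (hp1 : 1 ≤ p) (hp2 : p ≤ 2) :
    BddAbove {r : ℝ | ∃ s t : ℝ, 0 < s ^ 2 + t ^ 2 ∧
      r = ((t ^ 2 + s ^ 2 + 2 * s + 1) ^ (p / 2) - 1 - p * s) /
        ((√(t ^ 2 + s ^ 2 + 2 * s + 1) + 1) ^ (p - 2) * (t ^ 2 + s ^ 2))} := by
  refine ⟨8, ?_⟩
  rintro r ⟨s, t, hst, rfl⟩
  rw [div_le_iff₀ (mul_pos (by positivity) (by linarith))]
  exact rpow_sub_one_sub_mul_le_eight_mul hp1 hp2 (by nlinarith)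

lemma le_c3_mul {s q : ℝ} (hp1 : 1 ≤ p) (hp2 : p ≤ 2) (hsq : s ^ 2 ≤ q) (hq : 0 < q) :
    (q + 2 * s + 1) ^ (p / 2) - 1 - p * s ≤ c3 p * ((√(q + 2 * s + 1) + 1) ^ (p - 2) * q) := by
  obtain ⟨t, rfl⟩ : ∃ t, q = t ^ 2 + s ^ 2 := ⟨√(q - s ^ 2), by rw [sq_sqrt (by linarith)]; ring⟩
  rw [← div_le_iff₀ (by positivity)]
  exact le_csSup (c3_bddAbove hp1 hp2) ⟨s, t, by linarith, rfl⟩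

lemma div_two_rpow_le_c3 (hp1 : 1 ≤ p) (hp2 : p ≤ 2) : p / 2 ^ (p - 1) ≤ c3 p := by
  -- The quotient at `(s, t) = (-2, 0)` is `2p / 2^p`.
  refine le_csSup (c3_bddAbove hp1 hp2) ⟨-2, 0, by norm_num, ?_⟩
  rw [show p - 1 = (p - 2) + 1 by ring, rpow_add_one two_ne_zero]
  norm_num
  ring

lemma one_le_div_two_rpow (hp1 : 1 ≤ p) (hp2 : p ≤ 2) : 1 ≤ p / 2 ^ (p - 1) := by
  have := rpow_one_add_le_one_add_mul_self (s := 1) (by norm_num) (by linarith : 0 ≤ p - 1)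
    (by linarith)
  rw [one_le_div (by positivity)]
  norm_num at this
  linarith

lemma rpow_sub_rpow_sub_mul_le_c3 {a b n R : ℝ} (hp1 : 1 ≤ p) (hp2 : p ≤ 2) (ha : 0 < a)
    (hb : 0 ≤ b) (hn : 0 < n) (hR : |R| ≤ a * n) (hb2 : b ^ 2 = a ^ 2 + 2 * R + n ^ 2) :
    b ^ p - a ^ p - p * a ^ (p - 2) * R ≤ c3 p * n ^ 2 / (b + a) ^ (2 - p) := by
  have hR2 : R ^ 2 ≤ a ^ 2 * n ^ 2 := by
    rw [← mul_pow, ← sq_abs]; exact pow_le_pow_left₀ (abs_nonneg R) hR 2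
  have hsq : (R / a ^ 2) ^ 2 ≤ n ^ 2 / a ^ 2 := by
    rw [div_pow, div_le_div_iff₀ (by positivity) (by positivity)]
    nlinarith [mul_le_mul_of_nonneg_right hR2 (sq_nonneg a)]
  have key := le_c3_mul hp1 hp2 hsq (by positivity)
  obtain ⟨x, hx, rfl⟩ : ∃ x, 0 ≤ x ∧ b = a * x := ⟨b / a, by positivity, by field_simp⟩
  have hX : n ^ 2 / a ^ 2 + 2 * (R / a ^ 2) + 1 = x ^ 2 := by
    field_simp; linarith
  rw [hX, rpow_div_two_eq_sqrt p (sq_nonneg x), sqrt_sq hx] at key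
  rw [mul_rpow ha.le hx, show a * x + a = a * (x + 1) by ring, mul_rpow ha.le (by positivity),
    show 2 - p = -(p - 2) by ring, rpow_neg ha.le, rpow_neg (by positivity),
    show a ^ p = a ^ (p - 2) * a ^ 2 by rw [← rpow_natCast, ← rpow_add ha]; norm_num]
  have hα : 0 < a ^ (p - 2) := rpow_pos_of_pos ha _
  have hβ : 0 < (x + 1) ^ (p - 2) := rpow_pos_of_pos (by positivity) _
  generalize a ^ (p - 2) = α, (x + 1) ^ (p - 2) = β, x ^ p = y at *
  rw [div_eq_mul_inv, mul_inv, inv_inv, inv_inv]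
  field_simp at key
  nlinarith [mul_le_mul_of_nonneg_left key hα.le]

lemma Cp_self (hp : p ≠ 0) {ℓ : ℕ} (ξ : EuclideanSpace ℂ (Fin ℓ)) : Cp p ξ ξ = ‖ξ‖ ^ p := by
  simp [Cp, zero_rpow hp]

lemma Cp_zero_right {ℓ : ℕ} (ξ : EuclideanSpace ℂ (Fin ℓ)) : Cp p ξ 0 = 0 := by
  simp [Cp]

lemma Cp_le_c3 (hp1 : 1 ≤ p) (hp2 : p ≤ 2) {ℓ : ℕ} {ξ η : EuclideanSpace ℂ (Fin ℓ)}
    (hξη : ξ ≠ η) (hη : η ≠ 0) :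
    Cp p ξ η ≤ c3 p * ‖η‖ ^ 2 / (‖ξ‖ + ‖ξ - η‖) ^ (2 - p) := by
  have hξ : ‖ξ‖ ^ 2 = ‖ξ - η‖ ^ 2 + 2 * re (inner ℂ (ξ - η) η) + ‖η‖ ^ 2 := by
    simpa only [sub_add_cancel, RCLike.re_to_complex] using norm_add_sq (𝕜 := ℂ) (ξ - η) η
  exact rpow_sub_rpow_sub_mul_le_c3 hp1 hp2 (norm_pos_iff.2 (sub_ne_zero.2 hξη))
    (norm_nonneg ξ) (norm_pos_iff.2 hη) ((abs_re_le_norm _).trans (norm_inner_le_norm _ _)) hξ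

end

theorem Cp_upper_bound_c3_general (p : ℝ) (hp1 : 1 < p) (hp2 : p < 2) (ℓ : ℕ) :
    (∀ ξ η : EuclideanSpace ℂ (Fin ℓ), 0 < ‖ξ‖ + ‖ξ - η‖ →
      Cp p ξ η ≤ c3 p * ‖η‖ ^ 2 / (‖ξ‖ + ‖ξ - η‖) ^ (2 - p)) ∧
      c3 p ∈ Set.Ici (p / 2 ^ (p - 1)) := by
  have hc3 : p / 2 ^ (p - 1) ≤ c3 p := div_two_rpow_le_c3 hp1.le hp2.le
  refine ⟨fun ξ η hpos => ?_, hc3⟩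
  obtain rfl | hξη := eq_or_ne ξ η
  · have hξ : 0 < ‖ξ‖ := by simpa using hpos
    have hpow : ‖ξ‖ ^ 2 / ‖ξ‖ ^ (2 - p) = ‖ξ‖ ^ p := by
      rw [rpow_sub hξ, rpow_two, div_div_cancel₀ (by positivity)]
    rw [Cp_self (by linarith), sub_self, norm_zero, add_zero, mul_div_assoc, hpow]
    exact le_mul_of_one_le_left (by positivity) ((one_le_div_two_rpow hp1.le hp2.le).trans hc3)
  obtain rfl | hη := eq_or_ne η 0
  · simp [Cp_zero_right]
  exact Cp_le_c3 hp1.le hp2.le hξη hη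

/-- For `1 < p < 2` and `ℓ ≥ 2`, for all `ξ, η ∈ ℂ^ℓ` with `|ξ| + |ξ−η| > 0`,
`C_p(ξ,η) ≤ c₃(p)|η|²/(|ξ|+|ξ−η|)^{2−p}`, and `c₃(p) ∈ [p/2^{p−1}, ∞)`. -/
theorem Cp_upper_bound_c3 (p : ℝ) (hp1 : 1 < p) (hp2 : p < 2) (ℓ : ℕ) (hℓ : 2 ≤ ℓ) :
    (∀ ξ η : EuclideanSpace ℂ (Fin ℓ), 0 < ‖ξ‖ + ‖ξ - η‖ →
      Cp p ξ η ≤ c3 p * ‖η‖ ^ 2 / (‖ξ‖ + ‖ξ - η‖) ^ (2 - p)) ∧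
      c3 p ∈ Set.Ici (p / 2 ^ (p - 1)) :=
  Cp_upper_bound_c3_general p hp1 hp2 ℓ
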